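/- Let X and Y be measurable spaces equipped with σ-finite measures μ and ν, and let q and π be joint probability densities on X×Y with respect to μ⊗ν whose x-marginals agree: q_X(x) = π_X(x) for μ-almost every x. Then the joint squared Hellinger distance equals the expected conditional squared Hellinger distance: H(q, π)² = ∫_X π_X(x) · H(q(·|x), π(·|x))² dμ(x), where on the left H is taken with respect to μ⊗ν and on the right with respect to ν. -/
import Mathlib


open MeasureTheory Filter

/-- Hellinger distance between two densities `p`, `q` with respect to a measure `m`:
`H(p,q) = (∫ (√p − √q)² dm)^{1/2}`. -/
noncomputable def hell {Z : Type*} [MeasurableSpace Z] (m : Measure Z) (p q : Z → ℝ) : ℝ :=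
  Real.sqrt (∫ z, (Real.sqrt (p z) - Real.sqrt (q z)) ^ 2 ∂m)

lemma hell_sq {Z : Type*} [MeasurableSpace Z] (m : Measure Z) (p q : Z → ℝ) :
    hell m p q ^ 2 = ∫ z, (Real.sqrt (p z) - Real.sqrt (q z)) ^ 2 ∂m :=
  Real.sq_sqrt (integral_nonneg fun _ => sq_nonneg _)

/-- Disintegration of the squared Hellinger distance: if `q` and `π`
are joint probability densities on `X × Y` with respect to `μ ⊗ ν` whose x-marginals
agree μ-a.e., then the joint squared Hellinger distance equals the expected conditional
squared Hellinger distance: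
`H(q, π)² = ∫ π_X(x) · H(q(·|x), π(·|x))² dμ(x)`,
where `q(y|x) = q(x,y) / q_X(x)` and `π(y|x) = π(x,y) / π_X(x)` with
`q_X(x) = ∫ q(x,y) dν(y)`, `π_X(x) = ∫ π(x,y) dν(y)`. -/
theorem stmt7 {X Y : Type*} [MeasurableSpace X] [MeasurableSpace Y]
    (μ : Measure X) (ν : Measure Y) [SigmaFinite μ] [SigmaFinite ν]
    (q ptrue : X × Y → ℝ)
    (hqm : Measurable q) (hπm : Measurable ptrue)
    (hq0 : ∀ z, 0 ≤ q z) (hπ0 : ∀ z, 0 ≤ ptrue z)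
    (hq1 : ∫ z, q z ∂(μ.prod ν) = 1) (hπ1 : ∫ z, ptrue z ∂(μ.prod ν) = 1)
    (pX : X → ℝ) (hpX : ∀ x, pX x = ∫ y, ptrue (x, y) ∂ν)
    (hmarg : ∀ᵐ x ∂μ, (∫ y, q (x, y) ∂ν) = pX x) :
    hell (μ.prod ν) q ptrue ^ 2
      = ∫ x, pX x *
          hell ν (fun y => q (x, y) / (∫ y', q (x, y') ∂ν))
                 (fun y => ptrue (x, y) / pX x) ^ 2 ∂μ := by
  have hq_int : Integrable q (μ.prod ν) := by
    by_contra h; rw [integral_undef h] at hq1; norm_num at hq1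
  have hπ_int : Integrable ptrue (μ.prod ν) := by
    by_contra h; rw [integral_undef h] at hπ1; norm_num at hπ1
  set F : X × Y → ℝ := fun z => (Real.sqrt (q z) - Real.sqrt (ptrue z)) ^ 2 with hFdef
  have hFm : Measurable F := (hqm.sqrt.sub hπm.sqrt).pow_const 2
  have hFle : ∀ z, F z ≤ 2 * q z + 2 * ptrue z := by
    intro z
    simp only [hFdef]
    have h1 := Real.sq_sqrt (hq0 z)
    have h2 := Real.sq_sqrt (hπ0 z)
    nlinarith [sq_nonneg (Real.sqrt (q z) + Real.sqrt (ptrue z))]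
  have hF_int : Integrable F (μ.prod ν) := by
    refine ((hq_int.const_mul 2).add (hπ_int.const_mul 2)).mono'
      hFm.aestronglyMeasurable (ae_of_all _ fun z => ?_)
    rw [Real.norm_of_nonneg (sq_nonneg _)]
    exact hFle z
  rw [hell_sq, integral_prod _ hF_int]
  refine integral_congr_ae ?_
  filter_upwards [hmarg, hq_int.prod_right_ae, hπ_int.prod_right_ae] with x hmx hqx hπx
  rw [hell_sq, hmx]
  have hc0 : 0 ≤ pX x := by rw [hpX]; exact integral_nonneg fun y => hπ0 _
  rcases hc0.eq_or_lt with hc | hc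
  · -- pX x = 0 : both sides vanish
    have hπ0' : (fun y => ptrue (x, y)) =ᵐ[ν] 0 :=
      (integral_eq_zero_iff_of_nonneg (fun y => hπ0 _) hπx).mp (by rw [← hpX]; exact hc.symm)
    have hq0' : (fun y => q (x, y)) =ᵐ[ν] 0 :=
      (integral_eq_zero_iff_of_nonneg (fun y => hq0 _) hqx).mp (by rw [hmx]; exact hc.symm)
    have : ∫ y, F (x, y) ∂ν = 0 := by
      refine integral_eq_zero_of_ae ?_
      filter_upwards [hπ0', hq0'] with y h1 h2
      simp only [F, h1, h2, Pi.zero_apply] at *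
      simp [h1, h2]
    rw [this, ← hc]
    ring
  · -- pX x > 0
    have hrw : ∀ y, (Real.sqrt (q (x, y) / pX x) - Real.sqrt (ptrue (x, y) / pX x)) ^ 2
        = F (x, y) / pX x := by
      intro y
      rw [Real.sqrt_div (hq0 _), Real.sqrt_div (hπ0 _), div_sub_div_same, div_pow,
        Real.sq_sqrt hc0]
    simp only [hrw]
    rw [integral_div, mul_div_cancel₀ _ hc.ne']
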